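/- Every substitution instance of the Grzegorczyk axiom □(□(p→□p)→p)→p is provable in the normal modal logic generated by the S4 axioms (□p→p and □p→□□p) together with the axiom Grz*. -/
import Mathlib


namespace GrzPaper

/-- Propositional modal formulas, built from variables, falsum, implication and box. -/
inductive Formula : Type
  | var : ℕ → Formula
  | fls : Formula
  | impl : Formula → Formula → Formula
  | box : Formula → Formula
deriving DecidableEq

namespace Formula

def neg (φ : Formula) : Formula := impl φ fls
def tru : Formula := neg fls
def disj (φ ψ : Formula) : Formula := impl (neg φ) ψ
def conj (φ ψ : Formula) : Formula := neg (impl φ (neg ψ))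
def dia (φ : Formula) : Formula := neg (box (neg φ))

/-- Uniform substitution. -/
def subst (σ : ℕ → Formula) : Formula → Formula
  | var n => σ n
  | fls => fls
  | impl a b => impl (subst σ a) (subst σ b)
  | box a => box (subst σ a)

/-- Propositional (Boolean) evaluation, treating variables and boxed formulas as atoms. -/
def evalProp (v : Formula → Bool) : Formula → Bool
  | var n => v (var n)
  | fls => false
  | impl a b => !(evalProp v a) || evalProp v b
  | box a => v (box a)

/-- A propositional tautology: true under every Boolean valuation of the atoms
(variables and boxed subformulas). -/
def Tautology (φ : Formula) : Prop := ∀ v, evalProp v φ = true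

end Formula

open Formula

/-- A normal modal logic: contains all propositional tautologies and all instances of K,
closed under modus ponens, necessitation and uniform substitution. -/
structure IsNormalLogic (L : Set Formula) : Prop where
  taut : ∀ φ, Tautology φ → φ ∈ L
  axK : ∀ φ ψ, impl (box (impl φ ψ)) (impl (box φ) (box ψ)) ∈ L
  mp : ∀ φ ψ, impl φ ψ ∈ L → φ ∈ L → ψ ∈ L
  nec : ∀ φ, φ ∈ L → box φ ∈ L
  subst : ∀ φ σ, φ ∈ L → φ.subst σ ∈ L

/-- The normal modal logic generated by a set of axioms: the smallest normal modal
logic containing them. -/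
def Generated (Ax : Set Formula) : Set Formula :=
  ⋂₀ {L | IsNormalLogic L ∧ Ax ⊆ L}

def pv : Formula := var 0
def qv : Formula := var 1

def axT : Formula := impl (box pv) pv
def axFour : Formula := impl (box pv) (box (box pv))
def axGrz : Formula := impl (box (impl (box (impl pv (box pv))) pv)) pv
def axPoint2 : Formula := impl (dia (box pv)) (box (dia pv))
def axPoint3 : Formula := disj (box (impl (box pv) qv)) (box (impl (box qv) pv))

/-- penultimate(φ) : φ ∧ ◇¬φ ∧ □(¬φ → □¬φ). -/
def penultimate (φ : Formula) : Formula :=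
  conj φ (conj (dia (neg φ)) (box (impl (neg φ) (box (neg φ)))))

/-- contingent(φ) : ◇φ ∧ ◇¬φ. -/
def contingent (φ : Formula) : Formula := conj (dia φ) (dia (neg φ))

/-- The axiom Grz* : contingent(p) → ◇(penultimate(p) ∨ penultimate(¬p)). -/
def axGrzStar : Formula :=
  impl (contingent pv) (dia (disj (penultimate pv) (penultimate (neg pv))))

def Grz : Set Formula := Generated {axGrz}
def GrzStarLogic : Set Formula := Generated {axGrzStar}
def S4GrzStar : Set Formula := Generated {axT, axFour, axGrzStar}
def Grz2 : Set Formula := Generated {axGrz, axPoint2}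
def Grz3 : Set Formula := Generated {axGrz, axPoint3}
def KLogic : Set Formula := Generated ∅

/-- A Kripke model: an accessibility relation together with a valuation. -/
structure KripkeModel (W : Type) where
  rel : W → W → Prop
  val : ℕ → W → Prop

/-- Satisfaction of a modal formula at a world of a Kripke model. -/
def Satisfies {W : Type} (M : KripkeModel W) : W → Formula → Prop
  | w, .var n => M.val n w
  | _, .fls => False
  | w, .impl a b => Satisfies M w a → Satisfies M w b
  | w, .box a => ∀ v, M.rel w v → Satisfies M v a

/-- Validity of a formula on a Kripke frame. -/
def ValidOnFrame (W : Type) (R : W → W → Prop) (φ : Formula) : Prop :=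
  ∀ (val : ℕ → W → Prop) (w : W), Satisfies ⟨R, val⟩ w φ

/-- A model labeling of (M,w₀) for (N,u₀): a substitution σ such that every formula is
true at (M,w₀) iff its σ-instance is true at (N,u₀). -/
def ModelLabeling {W U : Type} (M : KripkeModel W) (w0 : W) (N : KripkeModel U) (u0 : U)
    (σ : ℕ → Formula) : Prop :=
  ∀ φ : Formula, Satisfies M w0 φ ↔ Satisfies N u0 (φ.subst σ)

/-- A frame labeling of the frame (W,R) with initial node w₀ for the pointed model (N,u₀). -/
def FrameLabeling {W U : Type} (R : W → W → Prop) (w0 : W) (N : KripkeModel U) (u0 : U)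
    (Φ : W → Formula) : Prop :=
  Satisfies N u0 (Φ w0) ∧
  (∀ u, N.rel u0 u → ∀ w, Satisfies N u (Φ w) →
    ∀ w', (Satisfies N u (dia (Φ w')) ↔ R w w')) ∧
  (∀ u, N.rel u0 u → ∃! w, Satisfies N u (Φ w))

def bigOr : List Formula → Formula
  | [] => fls
  | φ :: l => disj φ (bigOr l)

def bigAnd : List Formula → Formula
  | [] => tru
  | φ :: l => conj φ (bigAnd l)

open Classical in
/-- The disjunction ⋁ {Φ w : P w}. -/
noncomputable def labelFormula {W : Type} [Fintype W] (Φ : W → Formula) (P : W → Prop) :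
    Formula :=
  bigOr ((Finset.univ.filter P).toList.map Φ)

/-- Θ_A : the formula asserting that the button pattern is exactly A. -/
noncomputable def Theta {n : ℕ} (b : Fin n → Formula) (A : Finset (Fin n)) : Formula :=
  bigAnd ((Finset.univ : Finset (Fin n)).toList.map
    (fun i => if i ∈ A then box (b i) else neg (box (b i))))

/-- b₀,…,b_{n−1} are independent buttons at u₀: none is pushed (necessary) at u₀, and
necessarily, whenever the button pattern is exactly A, every larger pattern is possible. -/
def IndependentButtons {U : Type} (N : KripkeModel U) (u0 : U) {n : ℕ}
    (b : Fin n → Formula) : Prop :=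
  (∀ i, ¬ Satisfies N u0 (box (b i))) ∧
  ∀ A : Finset (Fin n), ∀ u, N.rel u0 u → Satisfies N u (Theta b A) →
    ∀ A' : Finset (Fin n), A ⊆ A' → Satisfies N u (dia (Theta b A'))

/-- r₀,…,r_{n−1} form a ratchet of length n at u₀. -/
def Ratchet {U : Type} (N : KripkeModel U) (u0 : U) {n : ℕ} (r : Fin n → Formula) : Prop :=
  (∀ i : Fin n, (i.val = 0 → Satisfies N u0 (box (r i))) ∧
      (0 < i.val → ¬ Satisfies N u0 (box (r i)))) ∧
  (∀ u, N.rel u0 u → ∀ i j : Fin n, i < j →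
      Satisfies N u (box (r j)) → Satisfies N u (box (r i))) ∧
  (∀ u, N.rel u0 u → ∀ i : Fin n, 0 < i.val →
      (∀ j : Fin n, Satisfies N u (box (r j)) ↔ j < i) →
        ∃ v, N.rel u v ∧ ∀ j : Fin n, Satisfies N v (box (r j)) ↔ j ≤ i)

/-- A (finite) tree order: a partial order with a least element in which the set of
predecessors of every element is linearly ordered. -/
def IsTreeOrder {W : Type} (R : W → W → Prop) : Prop :=
  IsPartialOrder W R ∧ (∃ r, ∀ x, R r x) ∧ ∀ x a b, R a x → R b x → R a b ∨ R b a

/-- A baled tree order: a partial order with a greatest element t whose removal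
leaves a tree. -/
def IsBaledTreeOrder {W : Type} (R : W → W → Prop) : Prop :=
  IsPartialOrder W R ∧ ∃ t : W, (∀ x, R x t) ∧
    (∃ r, r ≠ t ∧ ∀ x, x ≠ t → R r x) ∧
    (∀ x a b, x ≠ t → R a x → R b x → R a b ∨ R b a)

/-- Height of a node: the number of its strict predecessors. -/
noncomputable def heightOf {W : Type} (R : W → W → Prop) (x : W) : ℕ :=
  Nat.card {y : W // R y x ∧ y ≠ x}

/-- y is an immediate successor of x. -/
def ImmSucc {W : Type} (R : W → W → Prop) (x y : W) : Prop :=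
  R x y ∧ x ≠ y ∧ ∀ z, R x z → R z y → z = x ∨ z = y

def IsMaximal {W : Type} (R : W → W → Prop) (x : W) : Prop := ∀ z, R x z → z = x

/-- A regular finite tree: all maximal elements have the same height, and any two
elements of the same height have the same number of immediate successors. -/
def IsRegularTree {W : Type} (R : W → W → Prop) : Prop :=
  IsTreeOrder R ∧
  (∀ x y, IsMaximal R x → IsMaximal R y → heightOf R x = heightOf R y) ∧
  (∀ x y, heightOf R x = heightOf R y →
    Nat.card {z : W // ImmSucc R x z} = Nat.card {z : W // ImmSucc R y z})


/-! ### Auxiliary machinery for Statement 1: a Hilbert-style proof calculus -/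

/-- Hilbert-style provability in the normal modal logic generated by `Ax`. -/
inductive Prov (Ax : Set Formula) : Formula → Prop
  | taut : ∀ φ, Tautology φ → Prov Ax φ
  | axK : ∀ φ ψ, Prov Ax (impl (box (impl φ ψ)) (impl (box φ) (box ψ)))
  | axm : ∀ φ, φ ∈ Ax → Prov Ax φ
  | mp : ∀ φ ψ, Prov Ax (impl φ ψ) → Prov Ax φ → Prov Ax ψ
  | nec : ∀ φ, Prov Ax φ → Prov Ax (box φ)
  | subst : ∀ φ σ, Prov Ax φ → Prov Ax (φ.subst σ)

theorem prov_mem {Ax : Set Formula} {φ : Formula} (h : Prov Ax φ) : φ ∈ Generated Ax := by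
  apply Set.mem_sInter.mpr
  rintro L ⟨hN, hAx⟩
  induction h with
  | taut φ ht => exact hN.taut φ ht
  | axK φ ψ => exact hN.axK φ ψ
  | axm φ hφ => exact hAx hφ
  | mp φ ψ _ _ ih1 ih2 => exact hN.mp φ ψ ih1 ih2
  | nec φ _ ih => exact hN.nec φ ih
  | subst φ σ _ ih => exact hN.subst φ σ ih

lemma mp2 {Ax : Set Formula} {A B C : Formula} (h : Prov Ax (impl A (impl B C)))
    (ha : Prov Ax A) (hb : Prov Ax B) : Prov Ax C :=
  Prov.mp _ _ (Prov.mp _ _ h ha) hb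

lemma taut_syll (A B C : Formula) :
    Tautology (impl (impl A B) (impl (impl B C) (impl A C))) := by
  intro v
  simp only [evalProp]
  generalize evalProp v A = a
  generalize evalProp v B = b
  generalize evalProp v C = c
  revert a b c; decide

lemma syll {Ax : Set Formula} {A B C : Formula} (h1 : Prov Ax (impl A B))
    (h2 : Prov Ax (impl B C)) : Prov Ax (impl A C) :=
  mp2 (Prov.taut _ (taut_syll A B C)) h1 h2

lemma boxmono {Ax : Set Formula} {A B : Formula} (h : Prov Ax (impl A B)) :
    Prov Ax (impl (box A) (box B)) :=
  Prov.mp _ _ (Prov.axK A B) (Prov.nec _ h)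

lemma boxmono2 {Ax : Set Formula} {A B C : Formula} (h : Prov Ax (impl A (impl B C))) :
    Prov Ax (impl (box A) (impl (box B) (box C))) :=
  syll (boxmono h) (Prov.axK B C)

def S4Ax : Set Formula := {axT, axFour, axGrzStar}

lemma provT (A : Formula) : Prov S4Ax (impl (box A) A) := by
  have h := Prov.subst axT (fun _ => A) (Prov.axm (Ax := S4Ax) _ (by simp [S4Ax]))
  simpa [axT, pv, Formula.subst] using h

lemma prov4 (A : Formula) : Prov S4Ax (impl (box A) (box (box A))) := by
  have h := Prov.subst axFour (fun _ => A) (Prov.axm (Ax := S4Ax) _ (by simp [S4Ax]))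
  simpa [axFour, pv, Formula.subst] using h

lemma provGrzStar : Prov S4Ax axGrzStar :=
  Prov.axm _ (by simp [S4Ax])

/-- The inner formula of the Grzegorczyk axiom: `□(p→□p)→p`. -/
def Gf : Formula := impl (box (impl pv (box pv))) pv

lemma taut1 (A B : Formula) : Tautology (impl (neg A) (impl A B)) := by
  intro v
  simp only [neg, evalProp]
  generalize evalProp v A = a
  generalize evalProp v B = b
  revert a b; decide

lemma taut2 (X Y Z W : Formula) :
    Tautology (impl (impl X Y) (impl (impl Z (impl Y W)) (impl X (impl Z W)))) := by
  intro v
  simp only [evalProp]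
  generalize evalProp v X = x
  generalize evalProp v Y = y
  generalize evalProp v Z = z
  generalize evalProp v W = w
  revert x y z w; decide

lemma taut3 (A X Z : Formula) :
    Tautology (impl (impl X (impl Z A))
      (impl (impl (neg A) X) (impl Z (impl (neg A) fls)))) := by
  intro v
  simp only [neg, evalProp]
  generalize evalProp v A = a
  generalize evalProp v X = x
  generalize evalProp v Z = z
  revert a x z; decide

lemma taut4 (A : Formula) : Tautology (impl (neg (neg A)) A) := by
  intro v
  simp only [neg, evalProp]
  generalize evalProp v A = a
  revert a; decide

lemma taut5 (A U V : Formula) :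
    Tautology (impl (impl U V) (impl (impl (neg (neg A)) U) (impl A V))) := by
  intro v
  simp only [neg, evalProp]
  generalize evalProp v A = a
  generalize evalProp v U = u
  generalize evalProp v V = w
  revert a u w; decide

lemma taut6 (A E Y1 Y2 Z : Formula) :
    Tautology (impl (impl Y1 Y2) (impl (impl Z (impl Y2 A))
      (impl Z (neg (conj (neg A) (conj (neg E) Y1)))))) := by
  intro v
  simp only [neg, conj, evalProp]
  generalize evalProp v A = a
  generalize evalProp v E = e
  generalize evalProp v Y1 = y1
  generalize evalProp v Y2 = y2
  generalize evalProp v Z = z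
  revert a e y1 y2 z; decide

lemma taut7 (A F Y3 W : Formula) :
    Tautology (impl (impl Y3 (impl W F))
      (impl W (neg (conj A (conj (neg F) Y3))))) := by
  intro v
  simp only [neg, conj, evalProp]
  generalize evalProp v A = a
  generalize evalProp v F = f
  generalize evalProp v Y3 = y3
  generalize evalProp v W = w
  revert a f y3 w; decide

lemma taut8 (P Q W Z : Formula) :
    Tautology (impl (impl W (neg P)) (impl (impl Z (neg Q))
      (impl W (impl Z (neg (disj P Q)))))) := by
  intro v
  simp only [neg, disj, evalProp]
  generalize evalProp v P = p
  generalize evalProp v Q = q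
  generalize evalProp v W = w
  generalize evalProp v Z = z
  revert p q w z; decide

lemma taut9 (A B Z W W2 X Y N : Formula) :
    Tautology (impl (impl B A) (impl (impl Z W) (impl (impl W W2)
      (impl (impl X (impl Z A)) (impl (impl Y B)
      (impl (impl (conj (neg X) (neg Y)) (neg N))
      (impl (impl W2 (impl W N)) (impl Z A)))))))) := by
  intro v
  simp only [neg, conj, evalProp]
  generalize evalProp v A = a
  generalize evalProp v B = b
  generalize evalProp v Z = z
  generalize evalProp v W = w
  generalize evalProp v W2 = w2
  generalize evalProp v X = x
  generalize evalProp v Y = y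
  generalize evalProp v N = n
  revert a b z w w2 x y n; decide

/-- The key derivation: Grz is provable from S4 together with Grz*. -/
theorem grz_prov : Prov S4Ax axGrz := by
  -- abbreviations
  set bG := box Gf with hbG
  -- L1 : □¬p → (bG → p)
  have ha : Prov S4Ax (impl (box (neg pv)) (box (impl pv (box pv)))) :=
    boxmono (Prov.taut _ (taut1 pv (box pv)))
  have L1 : Prov S4Ax (impl (box (neg pv)) (impl bG pv)) :=
    mp2 (Prov.taut _ (taut2 (box (neg pv)) (box (impl pv (box pv))) bG pv)) ha (provT Gf)
  -- D0 : (¬p→□¬p) → (bG → (¬p→⊥))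
  have D0 : Prov S4Ax (impl (impl (neg pv) (box (neg pv)))
      (impl bG (impl (neg pv) fls))) :=
    Prov.mp _ _ (Prov.taut _ (taut3 pv (box (neg pv)) bG)) L1
  -- L2 : □(¬p→□¬p) → (□bG → □(¬p→⊥))
  have L2 : Prov S4Ax (impl (box (impl (neg pv) (box (neg pv))))
      (impl (box bG) (box (impl (neg pv) fls)))) := boxmono2 D0
  -- M1 : □¬¬p → □p
  have M1 : Prov S4Ax (impl (box (neg (neg pv))) (box pv)) :=
    boxmono (Prov.taut _ (taut4 pv))
  -- M2 : □(¬¬p→□¬¬p) → □(p→□p)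
  have M2 : Prov S4Ax (impl (box (impl (neg (neg pv)) (box (neg (neg pv)))))
      (box (impl pv (box pv)))) := by
    apply boxmono
    exact Prov.mp _ _
      (Prov.taut _ (taut5 pv (box (neg (neg pv))) (box pv))) M1
  -- L3 : bG → ¬pen(¬p)
  have L3 : Prov S4Ax (impl bG (neg (penultimate (neg pv)))) :=
    mp2 (Prov.taut _ (taut6 pv (box (neg (neg (neg pv))))
      (box (impl (neg (neg pv)) (box (neg (neg pv)))))
      (box (impl pv (box pv))) bG)) M2 (provT Gf)
  -- L2' : □bG → ¬pen(p)
  have L2' : Prov S4Ax (impl (box bG) (neg (penultimate pv))) :=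
    Prov.mp _ _ (Prov.taut _ (taut7 pv (box (impl (neg pv) fls))
      (box (impl (neg pv) (box (neg pv)))) (box bG))) L2
  -- C' : □bG → (bG → ¬(pen(p) ∨ pen(¬p)))
  have C' : Prov S4Ax (impl (box bG) (impl bG
      (neg (disj (penultimate pv) (penultimate (neg pv)))))) :=
    mp2 (Prov.taut _ (taut8 (penultimate pv) (penultimate (neg pv)) (box bG) bG)) L2' L3
  -- L4 : □□bG → (□bG → □¬(pen(p) ∨ pen(¬p)))
  have L4 : Prov S4Ax (impl (box (box bG)) (impl (box bG)
      (box (neg (disj (penultimate pv) (penultimate (neg pv))))))) := boxmono2 C'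
  -- final assembly
  have final := mp2 (mp2 (mp2 (Prov.mp _ _
    (Prov.taut _ (taut9 pv (box pv) bG (box bG) (box (box bG))
      (box (neg pv)) (box (neg (neg pv)))
      (box (neg (disj (penultimate pv) (penultimate (neg pv)))))))
    (provT pv)) (prov4 Gf) (prov4 bG)) L1 M1) provGrzStar L4
  exact final


/-- Every substitution instance of the Grzegorczyk axiom is provable in the
normal modal logic generated by the S4 axioms together with Grz*. -/
theorem statement1 : ∀ σ : ℕ → Formula, axGrz.subst σ ∈ S4GrzStar :=
  fun σ => prov_mem (Prov.subst _ σ grz_prov)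

end GrzPaper
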